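/- Let P = (x₁,…,xₙ : r₁,…,r_m) be a finite presentation of a group G satisfying condition (2.1) with distinct orders q₁,…,q_p, and let w be a word in x₁,…,xₙ with [w] = 1 in G. Then the group G_w presented by Q_w is trivial. -/

import Mathlib

/-- Generators of the presentation `Q_w`: `Sum.inl i` is the generator `xᵢ`
(for `i : Fin n`), while `Sum.inr 0 = a`, `Sum.inr 1 = α`, `Sum.inr 2 = b`,
`Sum.inr 3 = β`. -/
abbrev QwGen (n : ℕ) := Fin n ⊕ Fin 4

/-- The relators of the presentation `Q_w`: the relators `r₁, …, r_m` (indexed by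
`Sum.inl j`), the relators (iii)/(iv) (indexed by `Sum.inr (Sum.inl i)`, zero-based:
for `i < p` the relator `a^{-qᵢ} xᵢ α^{qᵢ} (β^{-(i+1)} b β^{i+1})⁻¹` and for
`p ≤ i < n` the relator `a^{-(q+i+1)} xᵢ α^{q+i+1} (β^{-(i+1)} b β^{i+1})⁻¹`, where
`q = max {q₁, …, q_p}`), and the relators (i), (ii), (v)
(indexed by `Sum.inr (Sum.inr t)` for `t = 0, 1, 2`). -/
def qwRel (n m p : ℕ) (r : Fin m → FreeGroup (Fin n)) (q : Fin p → ℕ)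
    (w : FreeGroup (Fin n)) : Fin m ⊕ (Fin n ⊕ Fin 3) → FreeGroup (QwGen n) :=
  let a : FreeGroup (QwGen n) := FreeGroup.of (Sum.inr 0)
  let al : FreeGroup (QwGen n) := FreeGroup.of (Sum.inr 1)
  let b : FreeGroup (QwGen n) := FreeGroup.of (Sum.inr 2)
  let be : FreeGroup (QwGen n) := FreeGroup.of (Sum.inr 3)
  let x : Fin n → FreeGroup (QwGen n) := fun i => FreeGroup.of (Sum.inl i)
  let W : FreeGroup (QwGen n) := FreeGroup.map Sum.inl w
  let Q : ℕ := Finset.univ.sup q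
  fun j => match j with
  | Sum.inl j => FreeGroup.map Sum.inl (r j)
  | Sum.inr (Sum.inl i) =>
      if h : (i : ℕ) < p then
        a ^ (-(q ⟨i, h⟩ : ℤ)) * x i * al ^ (q ⟨i, h⟩) *
          (be ^ (-((i : ℕ) + 1 : ℤ)) * b * be ^ ((i : ℕ) + 1))⁻¹
      else
        a ^ (-((Q + (i : ℕ) + 1 : ℕ) : ℤ)) * x i * al ^ (Q + (i : ℕ) + 1) *
          (be ^ (-((i : ℕ) + 1 : ℤ)) * b * be ^ ((i : ℕ) + 1))⁻¹
  | Sum.inr (Sum.inr t) =>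
      if t = 0 then a * al * a⁻¹ * (b ^ 2)⁻¹
      else if t = 1 then al * a * al⁻¹ * (b * be * b⁻¹)⁻¹
      else (W * al ^ 2 * W⁻¹ * (al ^ 2)⁻¹) *
        (be ^ (-((n : ℤ) + 1)) * b * be ^ (n + 1))⁻¹

/-!
In `G_w` the word `w` is trivial, because the relators of `G` hold there. Relator (v) then
kills `b`, (i) kills `α`, (ii) gives `β = a`, and (iii)/(iv) make every `xᵢ` a power of `a`.
So `G_w` is cyclic on `a`, hence abelian, and `xᵢ ↦ xᵢ` factors through the abelianization
of `G`: for `i ≤ p` the element `xᵢ = a ^ qᵢ` has order dividing `qᵢ`, so `a ^ qᵢ² = 1`, and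
`gcd qᵢ = 1` forces `a = 1`.
-/
open PresentedGroup Subgroup

theorem Nat.eq_one_of_forall_dvd_sq_of_gcd_eq_one {ι : Type*} {s : Finset ι} {f : ι → ℕ}
    (hf : s.gcd f = 1) {d : ℕ} (hd : ∀ i ∈ s, d ∣ f i ^ 2) : d = 1 := by
  refine Nat.eq_one_iff_not_exists_prime_dvd.2 fun ℓ hℓ hℓd => hℓ.ne_one (Nat.dvd_one.1 ?_)
  rw [← hf]
  exact Finset.dvd_gcd fun i hi => hℓ.dvd_of_dvd_pow (hℓd.trans (hd i hi))

theorem orderOf_map_dvd_orderOf_abelianization {G H : Type*} [Group G] [CommGroup H]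
    (f : G →* H) (g : G) : orderOf (f g) ∣ orderOf (Abelianization.of g) := by
  simpa only [Abelianization.lift_apply_of] using
    orderOf_map_dvd (Abelianization.lift f) (Abelianization.of g)

abbrev QwGroup (n m p : ℕ) (r : Fin m → FreeGroup (Fin n)) (q : Fin p → ℕ)
    (w : FreeGroup (Fin n)) : Type :=
  PresentedGroup (Set.range (qwRel n m p r q w))

namespace QwGroup

variable {n m p : ℕ} {r : Fin m → FreeGroup (Fin n)} {q : Fin p → ℕ} {w : FreeGroup (Fin n)}

local notation "𝐚" => (PresentedGroup.of (Sum.inr 0) : QwGroup n m p r q w)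
local notation "𝛂" => (PresentedGroup.of (Sum.inr 1) : QwGroup n m p r q w)
local notation "𝐛" => (PresentedGroup.of (Sum.inr 2) : QwGroup n m p r q w)
local notation "𝛃" => (PresentedGroup.of (Sum.inr 3) : QwGroup n m p r q w)
local notation "𝐱" => (fun i => PresentedGroup.of (Sum.inl i) : Fin n → QwGroup n m p r q w)

def ofBase : PresentedGroup (Set.range r) →* QwGroup n m p r q w :=
  PresentedGroup.map (FreeGroup.map Sum.inl) (by rintro _ ⟨j, rfl⟩; exact ⟨Sum.inl j, rfl⟩)

theorem ofBase_of (i : Fin n) : ofBase (q := q) (w := w) (of (rels := Set.range r) i) = 𝐱 i := rfl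

theorem conj_alpha_by_a : 𝐚 * 𝛂 * 𝐚⁻¹ = 𝐛 ^ 2 :=
  mk_eq_mk_of_mul_inv_mem ⟨Sum.inr (Sum.inr 0), rfl⟩

theorem conj_a_by_alpha : 𝛂 * 𝐚 * 𝛂⁻¹ = 𝐛 * 𝛃 * 𝐛⁻¹ :=
  mk_eq_mk_of_mul_inv_mem ⟨Sum.inr (Sum.inr 1), rfl⟩

theorem x_relation_of_lt (i : Fin n) (hi : (i : ℕ) < p) :
    (𝐚 ^ q ⟨i, hi⟩)⁻¹ * 𝐱 i * 𝛂 ^ q ⟨i, hi⟩ = (𝛃 ^ ((i : ℕ) + 1))⁻¹ * 𝐛 * 𝛃 ^ ((i : ℕ) + 1) :=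
  mk_eq_mk_of_mul_inv_mem ⟨Sum.inr (Sum.inl i), by simp only [qwRel, hi, zpow_neg]; norm_cast⟩

theorem x_relation_of_not_lt (i : Fin n) (hi : ¬(i : ℕ) < p) :
    (𝐚 ^ (Finset.univ.sup q + i + 1))⁻¹ * 𝐱 i * 𝛂 ^ (Finset.univ.sup q + i + 1) =
      (𝛃 ^ ((i : ℕ) + 1))⁻¹ * 𝐛 * 𝛃 ^ ((i : ℕ) + 1) :=
  mk_eq_mk_of_mul_inv_mem ⟨Sum.inr (Sum.inl i), by simp only [qwRel, hi, zpow_neg]; norm_cast⟩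

theorem commutator_relation :
    ofBase (mk _ w) * 𝛂 ^ 2 * (ofBase (mk _ w))⁻¹ * (𝛂 ^ 2)⁻¹ = (𝛃 ^ (n + 1))⁻¹ * 𝐛 * 𝛃 ^ (n + 1) :=
  mk_eq_mk_of_mul_inv_mem ⟨Sum.inr (Sum.inr 2), by simp only [qwRel, zpow_neg]; norm_cast⟩

section
variable (q) (hw : mk (Set.range r) w = 1)
include hw

theorem b_eq_one : 𝐛 = 1 := by
  have h := commutator_relation (p := p) (q := q) (r := r) (w := w)
  rwa [hw, map_one, one_mul, inv_one, mul_one, mul_inv_cancel, eq_comm, mul_assoc,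
    inv_mul_eq_one, eq_comm, mul_eq_right] at h

theorem alpha_eq_one : 𝛂 = 1 := by
  simpa [b_eq_one q hw] using conj_alpha_by_a (p := p) (q := q) (r := r) (w := w)

theorem beta_eq_a : 𝛃 = 𝐚 := by
  simpa [b_eq_one q hw, alpha_eq_one q hw] using
    (conj_a_by_alpha (p := p) (q := q) (r := r) (w := w)).symm

theorem x_eq_a_pow_of_lt (i : Fin n) (hi : (i : ℕ) < p) : 𝐱 i = 𝐚 ^ q ⟨i, hi⟩ := by
  have h := x_relation_of_lt (r := r) (q := q) (w := w) i hi
  rwa [b_eq_one q hw, alpha_eq_one q hw, one_pow, mul_one, mul_one, inv_mul_cancel, inv_mul_eq_one,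
    eq_comm] at h

theorem x_eq_a_pow_of_not_lt (i : Fin n) (hi : ¬(i : ℕ) < p) :
    𝐱 i = 𝐚 ^ (Finset.univ.sup q + i + 1) := by
  have h := x_relation_of_not_lt (r := r) (q := q) (w := w) i hi
  rwa [b_eq_one q hw, alpha_eq_one q hw, one_pow, mul_one, mul_one, inv_mul_cancel, inv_mul_eq_one,
    eq_comm] at h

theorem x_mem_zpowers_a (i : Fin n) : 𝐱 i ∈ zpowers 𝐚 := by
  by_cases hi : (i : ℕ) < p
  · rw [x_eq_a_pow_of_lt q hw i hi]; exact npow_mem_zpowers _ _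
  · rw [x_eq_a_pow_of_not_lt q hw i hi]; exact npow_mem_zpowers _ _

theorem zpowers_a_eq_top : zpowers 𝐚 = ⊤ := by
  refine eq_top_iff.2 fun g _ => generated_by _ _ ?_ g
  rintro (i | t)
  · exact x_mem_zpowers_a q hw i
  · fin_cases t
    · exact mem_zpowers _
    · simp [alpha_eq_one q hw]
    · simp [b_eq_one q hw]
    · simp [beta_eq_a q hw]

theorem isCyclic : IsCyclic (QwGroup n m p r q w) :=
  isCyclic_iff_exists_zpowers_eq_top.2 ⟨_, zpowers_a_eq_top q hw⟩

theorem a_pow_sq_eq_one (hpn : p ≤ n) (i : Fin p)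
    (hi : orderOf (Abelianization.of (of (rels := Set.range r) (Fin.castLE hpn i))) = q i) :
    𝐚 ^ (q i ^ 2) = 1 := by
  have := isCyclic q hw
  let _ := IsCyclic.commGroup (α := QwGroup n m p r q w)
  have hdvd := orderOf_map_dvd_orderOf_abelianization
    (ofBase : PresentedGroup (Set.range r) →* QwGroup n m p r q w) (of (Fin.castLE hpn i))
  rw [hi, ofBase_of, x_eq_a_pow_of_lt q hw _ i.isLt, orderOf_dvd_iff_pow_eq_one, ← pow_mul] at hdvd
  rwa [sq]

end
end QwGroup

theorem qw_trivial_of_word_trivial_general (n m p : ℕ) (hpn : p ≤ n)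
    (r : Fin m → FreeGroup (Fin n)) (q : Fin p → ℕ)
    (horder : ∀ i : Fin p,
      orderOf (Abelianization.of
        (PresentedGroup.of (rels := Set.range r) (Fin.castLE hpn i))) = q i)
    (hgcd : Finset.univ.gcd q = 1)
    (w : FreeGroup (Fin n)) (hw : PresentedGroup.mk (Set.range r) w = 1) :
    Subsingleton (PresentedGroup (Set.range (qwRel n m p r q w))) := by
  have ha : (of (Sum.inr 0) : QwGroup n m p r q w) = 1 := orderOf_eq_one_iff.1 <|
    Nat.eq_one_of_forall_dvd_sq_of_gcd_eq_one hgcd fun i _ =>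
      orderOf_dvd_of_pow_eq_one (QwGroup.a_pow_sq_eq_one q hw hpn i (horder i))
  refine subsingleton_of_forall_eq 1 fun g => ?_
  simpa [ha] using (QwGroup.zpowers_a_eq_top q hw).ge (mem_top g)

/-- Let `P = (x₁,…,xₙ : r₁,…,r_m)` be a finite presentation of a
group `G = PresentedGroup (Set.range r)` satisfying condition (2.1) with distinct
orders `q₁,…,q_p`, and let `w` be a word in `x₁,…,xₙ`.  Then the group `G_w`
presented by `Q_w` is trivial whenever `[w] = 1` in `G`. -/
theorem qw_trivial_of_word_trivial (n m p : ℕ) (hp1 : 1 ≤ p) (hpn : p ≤ n)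
    (r : Fin m → FreeGroup (Fin n)) (q : Fin p → ℕ)
    (hq1 : ∀ i, 1 ≤ q i) (hqinj : Function.Injective q)
    (horder : ∀ i : Fin p,
      orderOf (Abelianization.of
        (PresentedGroup.of (rels := Set.range r) (Fin.castLE hpn i))) = q i)
    (hgcd : Finset.univ.gcd q = 1)
    (w : FreeGroup (Fin n)) (hw : PresentedGroup.mk (Set.range r) w = 1) :
    Subsingleton (PresentedGroup (Set.range (qwRel n m p r q w))) :=
  qw_trivial_of_word_trivial_general n m p hpn r q horder hgcd w hw
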